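/- With the lines L_{i,n,m} on the Fermat cubic indexed as above, two lines in the same family, L_{i,n,m} and L_{i,n',m'} with (n,m) ≠ (n',m'), intersect if and only if n = n' or m = m'. -/
import Mathlib

/-- The 27 lines `L_{i,n,m}` of the Fermat cubic surface `x₀³+x₁³+x₂³+x₃³ = 0`:
`L_{0,n,m} = {x₀ + ε₃ⁿx₁ = x₂ + ε₃ᵐx₃ = 0}`, `L_{1,n,m} = {x₀ + ε₃ⁿx₂ = x₁ + ε₃ᵐx₃ = 0}`,
`L_{2,n,m} = {x₀ + ε₃ⁿx₃ = x₁ + ε₃ᵐx₂ = 0}`. -/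
def fermatLine (K : Type*) [Field K] (ε : K) :
    Fin 3 → ZMod 3 → ZMod 3 → Set (Projectivization K (Fin 4 → K))
  | 0, n, m => {p | p.rep 0 + ε ^ n.val * p.rep 1 = 0 ∧ p.rep 2 + ε ^ m.val * p.rep 3 = 0}
  | 1, n, m => {p | p.rep 0 + ε ^ n.val * p.rep 2 = 0 ∧ p.rep 1 + ε ^ m.val * p.rep 3 = 0}
  | 2, n, m => {p | p.rep 0 + ε ^ n.val * p.rep 3 = 0 ∧ p.rep 1 + ε ^ m.val * p.rep 2 = 0}

lemma aux_pow_eq {K : Type*} [Field K] {ε : K} (hε : IsPrimitiveRoot ε 3) {a b : ZMod 3}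
    (h : ε ^ a.val = ε ^ b.val) : a = b :=
  ZMod.val_injective 3 (hε.pow_inj (ZMod.val_lt a) (ZMod.val_lt b) h)

lemma aux_zero {K : Type*} [Field K] {ε : K} (hε : IsPrimitiveRoot ε 3) {a b : ZMod 3}
    (hab : a ≠ b) {x y : K} (h1 : x + ε ^ a.val * y = 0) (h2 : x + ε ^ b.val * y = 0) :
    x = 0 ∧ y = 0 := by
  have h3 : (ε ^ a.val - ε ^ b.val) * y = 0 := by linear_combination h1 - h2
  have hy : y = 0 := by
    rcases mul_eq_zero.1 h3 with h | h
    · exact absurd (aux_pow_eq hε (sub_eq_zero.1 h)) hab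
    · exact h
  exact ⟨by simpa [hy] using h1, hy⟩

lemma mem_line {K : Type*} [Field K] (v : Fin 4 → K) (hv : v ≠ 0) (c : K) (j k : Fin 4)
    (h : v j + c * v k = 0) :
    (Projectivization.mk K v hv).rep j + c * (Projectivization.mk K v hv).rep k = 0 := by
  obtain ⟨a, ha⟩ := Projectivization.exists_smul_eq_mk_rep K v hv
  rw [← ha]
  simp only [Pi.smul_apply, Units.smul_def, smul_eq_mul]
  linear_combination (a : K) * h

/-- Two distinct lines in the same family, `L_{i,n,m}` and `L_{i,n',m'}` with `(n,m) ≠ (n',m')`, intersect if and only if `n = n'` or `m = m'`. -/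
theorem stmt17 (K : Type*) [Field K] [IsAlgClosed K] [CharZero K]
    (ε : K) (hε : IsPrimitiveRoot ε 3) (i : Fin 3) (n m n' m' : ZMod 3)
    (hne : (n, m) ≠ (n', m')) :
    (fermatLine K ε i n m ∩ fermatLine K ε i n' m').Nonempty ↔
      (n = n' ∨ m = m') := by
  constructor
  · rintro ⟨p, hp, hp'⟩
    by_contra h
    push_neg at h
    obtain ⟨hn, hm⟩ := h
    apply p.rep_nonzero
    fin_cases i <;>
      simp only [fermatLine, Set.mem_setOf_eq] at hp hp'
    · obtain ⟨h0, h1⟩ := aux_zero hε hn hp.1 hp'.1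
      obtain ⟨h2, h3⟩ := aux_zero hε hm hp.2 hp'.2
      funext t; fin_cases t <;> assumption
    · obtain ⟨h0, h2⟩ := aux_zero hε hn hp.1 hp'.1
      obtain ⟨h1, h3⟩ := aux_zero hε hm hp.2 hp'.2
      funext t; fin_cases t <;> assumption
    · obtain ⟨h0, h3⟩ := aux_zero hε hn hp.1 hp'.1
      obtain ⟨h1, h2⟩ := aux_zero hε hm hp.2 hp'.2
      funext t; fin_cases t <;> assumption
  · rintro (rfl | rfl) <;> fin_cases i
    · exact ⟨Projectivization.mk K ![-ε ^ n.val, 1, 0, 0]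
        (by intro h; simpa using congrFun h 1),
        ⟨mem_line _ _ _ 0 1 (by simp), mem_line _ _ _ 2 3 (by simp)⟩,
        ⟨mem_line _ _ _ 0 1 (by simp), mem_line _ _ _ 2 3 (by simp)⟩⟩
    · exact ⟨Projectivization.mk K ![-ε ^ n.val, 0, 1, 0]
        (by intro h; simpa using congrFun h 2),
        ⟨mem_line _ _ _ 0 2 (by simp), mem_line _ _ _ 1 3 (by simp)⟩,
        ⟨mem_line _ _ _ 0 2 (by simp), mem_line _ _ _ 1 3 (by simp)⟩⟩
    · exact ⟨Projectivization.mk K ![-ε ^ n.val, 0, 0, 1]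
        (by intro h; simpa using congrFun h 3),
        ⟨mem_line _ _ _ 0 3 (by simp), mem_line _ _ _ 1 2 (by simp)⟩,
        ⟨mem_line _ _ _ 0 3 (by simp), mem_line _ _ _ 1 2 (by simp)⟩⟩
    · exact ⟨Projectivization.mk K ![0, 0, -ε ^ m.val, 1]
        (by intro h; simpa using congrFun h 3),
        ⟨mem_line _ _ _ 0 1 (by simp), mem_line _ _ _ 2 3 (by simp)⟩,
        ⟨mem_line _ _ _ 0 1 (by simp), mem_line _ _ _ 2 3 (by simp)⟩⟩
    · exact ⟨Projectivization.mk K ![0, -ε ^ m.val, 0, 1]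
        (by intro h; simpa using congrFun h 3),
        ⟨mem_line _ _ _ 0 2 (by simp), mem_line _ _ _ 1 3 (by simp)⟩,
        ⟨mem_line _ _ _ 0 2 (by simp), mem_line _ _ _ 1 3 (by simp)⟩⟩
    · exact ⟨Projectivization.mk K ![0, -ε ^ m.val, 1, 0]
        (by intro h; simpa using congrFun h 2),
        ⟨mem_line _ _ _ 0 3 (by simp), mem_line _ _ _ 1 2 (by simp)⟩,
        ⟨mem_line _ _ _ 0 3 (by simp), mem_line _ _ _ 1 2 (by simp)⟩⟩
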